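/- Let g₁ = X₄X₅X₆X₇, g₂ = X₂X₃X₆X₇, g₃ = X₁X₃X₅X₇, g₄ = Z₄Z₅Z₆Z₇, g₅ = Z₂Z₃Z₆Z₇, g₆ = Z₁Z₃Z₅Z₇ be the Steane code stabilizers on ℂ^128, and define the operator products h₁ = g₁g₂g₄, h₂ = g₁g₂g₄g₅, h₃ = g₁g₂, h₄ = g₂g₃g₅, h₅ = g₁g₃g₅, h₆ = g₅. Then: (i) every ψ in the Steane code space {ψ ∈ ℂ^128 : g_iψ = ψ for i = 1,…,6} satisfies h_jψ = ψ for all j = 1,…,6, so B_Steane ψ = 6ψ where B_Steane = Σ_{j=1}^6 h_j (the algebraic maximum); (ii) the common +1-eigenspace {ψ ∈ ℂ^128 : h_jψ = ψ for all j = 1,…,6} (the Bell-degenerate subspace of B_Steane) has dimension exactly 8. -/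
import Mathlib


open Matrix

/-- Pauli X matrix on a single qubit (basis indexed by `Bool`). -/
noncomputable def pX : Matrix Bool Bool ℂ := Matrix.of fun b c => if b = c then 0 else 1

/-- Pauli Z matrix on a single qubit. -/
noncomputable def pZ : Matrix Bool Bool ℂ :=
  Matrix.of fun b c => if b = c then (if b then -1 else 1) else 0

/-- Tensor product of single-qubit matrices, as an operator on the `n`-qubit space
`(Fin n → Bool) → ℂ ≅ ℂ^(2^n)`. -/
noncomputable def tensorOp {n : ℕ} (M : Fin n → Matrix Bool Bool ℂ) :
    Matrix (Fin n → Bool) (Fin n → Bool) ℂ :=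
  Matrix.of fun f g => ∏ i, M i (f i) (g i)

/-- The six Steane-code stabilizer generators
`g₁ = X₄X₅X₆X₇`, `g₂ = X₂X₃X₆X₇`, `g₃ = X₁X₃X₅X₇`,
`g₄ = Z₄Z₅Z₆Z₇`, `g₅ = Z₂Z₃Z₆Z₇`, `g₆ = Z₁Z₃Z₅Z₇` on `ℂ^128`. -/
noncomputable def steaneG : Fin 6 → Matrix (Fin 7 → Bool) (Fin 7 → Bool) ℂ :=
  ![tensorOp ![1, 1, 1, pX, pX, pX, pX],
    tensorOp ![1, pX, pX, 1, 1, pX, pX],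
    tensorOp ![pX, 1, pX, 1, pX, 1, pX],
    tensorOp ![1, 1, 1, pZ, pZ, pZ, pZ],
    tensorOp ![1, pZ, pZ, 1, 1, pZ, pZ],
    tensorOp ![pZ, 1, pZ, 1, pZ, 1, pZ]]

/-- The operator products `h₁ = g₁g₂g₄`, `h₂ = g₁g₂g₄g₅`, `h₃ = g₁g₂`, `h₄ = g₂g₃g₅`,
`h₅ = g₁g₃g₅`, `h₆ = g₅`. -/
noncomputable def steaneH : Fin 6 → Matrix (Fin 7 → Bool) (Fin 7 → Bool) ℂ :=
  ![steaneG 0 * steaneG 1 * steaneG 3,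
    steaneG 0 * steaneG 1 * steaneG 3 * steaneG 4,
    steaneG 0 * steaneG 1,
    steaneG 1 * steaneG 2 * steaneG 4,
    steaneG 0 * steaneG 2 * steaneG 4,
    steaneG 4]

/-- The Bell operator `B_Steane = Σ_{j=1}^6 h_j`. -/
noncomputable def bellSteane : Matrix (Fin 7 → Bool) (Fin 7 → Bool) ℂ :=
  ∑ j : Fin 6, steaneH j

lemma XX : pX * pX = 1 := by
  ext b c; cases b <;> cases c <;> simp [pX, Matrix.mul_apply, Fintype.sum_bool, Matrix.one_apply]

lemma ZZ : pZ * pZ = 1 := by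
  ext b c; cases b <;> cases c <;> simp [pZ, Matrix.mul_apply, Fintype.sum_bool, Matrix.one_apply]

lemma ZX : pZ * pX = -(pX * pZ) := by
  ext b c; cases b <;> cases c <;> simp [pZ, pX, Matrix.mul_apply, Fintype.sum_bool]

lemma trX : pX.trace = 0 := by simp [pX, Matrix.trace, Fintype.sum_bool, Matrix.diag]
lemma trZ : pZ.trace = 0 := by simp [pZ, Matrix.trace, Fintype.sum_bool, Matrix.diag]
lemma trXZ : (pX * pZ).trace = 0 := by
  simp [pZ, pX, Matrix.trace, Matrix.mul_apply, Fintype.sum_bool, Matrix.diag]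
lemma tr1 : (1 : Matrix Bool Bool ℂ).trace = 2 := by
  simp [Matrix.trace_one]

lemma tensorOp_mul {n : ℕ} (M N : Fin n → Matrix Bool Bool ℂ) :
    tensorOp M * tensorOp N = tensorOp fun i => M i * N i := by
  ext f g
  simp only [tensorOp, Matrix.mul_apply, Matrix.of_apply]
  rw [eq_comm]
  calc ∏ i, ∑ b, M i (f i) b * N i b (g i)
      = ∑ h ∈ Fintype.piFinset (fun _ : Fin n => (Finset.univ : Finset Bool)),
          ∏ i, M i (f i) (h i) * N i (h i) (g i) := by
        rw [Finset.prod_univ_sum]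
    _ = ∑ h : Fin n → Bool, (∏ i, M i (f i) (h i)) * ∏ i, N i (h i) (g i) := by
        rw [Fintype.piFinset_univ]
        exact Finset.sum_congr rfl fun h _ => Finset.prod_mul_distrib

lemma trace_tensorOp {n : ℕ} (M : Fin n → Matrix Bool Bool ℂ) :
    (tensorOp M).trace = ∏ i, (M i).trace := by
  simp only [Matrix.trace, Matrix.diag, tensorOp, Matrix.of_apply]
  rw [Finset.prod_univ_sum, Fintype.piFinset_univ]

lemma tensorOp_one {n : ℕ} : tensorOp (fun _ : Fin n => (1 : Matrix Bool Bool ℂ)) = 1 := by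
  ext f g
  simp only [tensorOp, Matrix.of_apply, Matrix.one_apply]
  by_cases h : f = g
  · subst h; simp
  · rw [if_neg h]
    obtain ⟨i, hi⟩ := Function.ne_iff.mp h
    exact Finset.prod_eq_zero (Finset.mem_univ i) (by simp [Matrix.one_apply, hi])

section vecLemmas
variable {α : Type*} (a b c d e f g : α)
lemma v0 : ![a,b,c,d,e,f,g] 0 = a := rfl
lemma v1 : ![a,b,c,d,e,f,g] 1 = b := rfl
lemma v2 : ![a,b,c,d,e,f,g] 2 = c := rfl
lemma v3 : ![a,b,c,d,e,f,g] 3 = d := rfl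
lemma v4 : ![a,b,c,d,e,f,g] 4 = e := rfl
lemma v5 : ![a,b,c,d,e,f,g] 5 = f := rfl
lemma v6 : ![a,b,c,d,e,f,g] 6 = g := rfl
end vecLemmas

noncomputable def k1 : Matrix (Fin 7 → Bool) (Fin 7 → Bool) ℂ := tensorOp ![1,1,1,pZ,pZ,pZ,pZ]
noncomputable def k2 : Matrix (Fin 7 → Bool) (Fin 7 → Bool) ℂ := tensorOp ![1,pZ,pZ,1,1,pZ,pZ]
noncomputable def k3 : Matrix (Fin 7 → Bool) (Fin 7 → Bool) ℂ := tensorOp ![1,pX,pX,pX,pX,1,1]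
noncomputable def k4 : Matrix (Fin 7 → Bool) (Fin 7 → Bool) ℂ := tensorOp ![pX,pX,1,1,pX,pX,1]

lemma hg3 : steaneG 3 = k1 := rfl
lemma hg4 : steaneG 4 = k2 := rfl

lemma tensorOp_congr {n : ℕ} {M N : Fin n → Matrix Bool Bool ℂ} (h : ∀ i, M i = N i) :
    tensorOp M = tensorOp N := by rw [funext h]

lemma hk3 : steaneG 0 * steaneG 1 = k3 := by
  show tensorOp _ * tensorOp _ = _
  rw [tensorOp_mul]
  exact tensorOp_congr fun i => by fin_cases i <;> simp [v0,v1,v2,v3,v4,v5,v6, XX]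

lemma hk4 : steaneG 1 * steaneG 2 = k4 := by
  show tensorOp _ * tensorOp _ = _
  rw [tensorOp_mul]
  exact tensorOp_congr fun i => by fin_cases i <;> simp [v0,v1,v2,v3,v4,v5,v6, XX]

lemma hk34 : steaneG 0 * steaneG 2 = k3 * k4 := by
  show tensorOp _ * tensorOp _ = _
  unfold k3 k4
  rw [tensorOp_mul, tensorOp_mul]
  exact tensorOp_congr fun i => by fin_cases i <;> simp [v0,v1,v2,v3,v4,v5,v6, XX]

lemma k1sq : k1 * k1 = 1 := by
  unfold k1; rw [tensorOp_mul, ← tensorOp_one]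
  exact tensorOp_congr fun i => by fin_cases i <;> simp [v0,v1,v2,v3,v4,v5,v6, ZZ]
lemma k2sq : k2 * k2 = 1 := by
  unfold k2; rw [tensorOp_mul, ← tensorOp_one]
  exact tensorOp_congr fun i => by fin_cases i <;> simp [v0,v1,v2,v3,v4,v5,v6, ZZ]
lemma k3sq : k3 * k3 = 1 := by
  unfold k3; rw [tensorOp_mul, ← tensorOp_one]
  exact tensorOp_congr fun i => by fin_cases i <;> simp [v0,v1,v2,v3,v4,v5,v6, XX]
lemma k4sq : k4 * k4 = 1 := by
  unfold k4; rw [tensorOp_mul, ← tensorOp_one]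
  exact tensorOp_congr fun i => by fin_cases i <;> simp [v0,v1,v2,v3,v4,v5,v6, XX]

lemma c12 : k1 * k2 = k2 * k1 := by
  unfold k1 k2; rw [tensorOp_mul, tensorOp_mul]
  exact tensorOp_congr fun i => by fin_cases i <;> simp [v0,v1,v2,v3,v4,v5,v6]
lemma c34 : k3 * k4 = k4 * k3 := by
  unfold k3 k4; rw [tensorOp_mul, tensorOp_mul]
  exact tensorOp_congr fun i => by fin_cases i <;> simp [v0,v1,v2,v3,v4,v5,v6]
lemma c13 : k1 * k3 = k3 * k1 := by
  unfold k1 k3; rw [tensorOp_mul, tensorOp_mul]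
  ext f g
  simp only [tensorOp, Matrix.of_apply]
  rw [Fin.prod_univ_seven, Fin.prod_univ_seven]
  simp only [v0,v1,v2,v3,v4,v5,v6, one_mul, mul_one, ZX, Matrix.neg_apply]
  ring
lemma c14 : k1 * k4 = k4 * k1 := by
  unfold k1 k4; rw [tensorOp_mul, tensorOp_mul]
  ext f g
  simp only [tensorOp, Matrix.of_apply]
  rw [Fin.prod_univ_seven, Fin.prod_univ_seven]
  simp only [v0,v1,v2,v3,v4,v5,v6, one_mul, mul_one, ZX, Matrix.neg_apply]
  ring
lemma c23 : k2 * k3 = k3 * k2 := by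
  unfold k2 k3; rw [tensorOp_mul, tensorOp_mul]
  ext f g
  simp only [tensorOp, Matrix.of_apply]
  rw [Fin.prod_univ_seven, Fin.prod_univ_seven]
  simp only [v0,v1,v2,v3,v4,v5,v6, one_mul, mul_one, ZX, Matrix.neg_apply]
  ring
lemma c24 : k2 * k4 = k4 * k2 := by
  unfold k2 k4; rw [tensorOp_mul, tensorOp_mul]
  ext f g
  simp only [tensorOp, Matrix.of_apply]
  rw [Fin.prod_univ_seven, Fin.prod_univ_seven]
  simp only [v0,v1,v2,v3,v4,v5,v6, one_mul, mul_one, ZX, Matrix.neg_apply]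
  ring

lemma trm0 : (k1).trace = 0 := by
  simp only [k1, k2, k3, k4, tensorOp_mul]
  rw [trace_tensorOp, Fin.prod_univ_seven]
  simp [v0,v1,v2,v3,v4,v5,v6, mul_assoc, XX, ZZ, ZX, trX, trZ, trXZ,
    Matrix.trace_neg, neg_mul, mul_neg]

lemma trm1 : (k2).trace = 0 := by
  simp only [k1, k2, k3, k4, tensorOp_mul]
  rw [trace_tensorOp, Fin.prod_univ_seven]
  simp [v0,v1,v2,v3,v4,v5,v6, mul_assoc, XX, ZZ, ZX, trX, trZ, trXZ,
    Matrix.trace_neg, neg_mul, mul_neg]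

lemma trm2 : (k3).trace = 0 := by
  simp only [k1, k2, k3, k4, tensorOp_mul]
  rw [trace_tensorOp, Fin.prod_univ_seven]
  simp [v0,v1,v2,v3,v4,v5,v6, mul_assoc, XX, ZZ, ZX, trX, trZ, trXZ,
    Matrix.trace_neg, neg_mul, mul_neg]

lemma trm3 : (k4).trace = 0 := by
  simp only [k1, k2, k3, k4, tensorOp_mul]
  rw [trace_tensorOp, Fin.prod_univ_seven]
  simp [v0,v1,v2,v3,v4,v5,v6, mul_assoc, XX, ZZ, ZX, trX, trZ, trXZ,
    Matrix.trace_neg, neg_mul, mul_neg]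

lemma trm4 : (k1*k2).trace = 0 := by
  simp only [k1, k2, k3, k4, tensorOp_mul]
  rw [trace_tensorOp, Fin.prod_univ_seven]
  simp [v0,v1,v2,v3,v4,v5,v6, mul_assoc, XX, ZZ, ZX, trX, trZ, trXZ,
    Matrix.trace_neg, neg_mul, mul_neg]

lemma trm5 : (k1*k3).trace = 0 := by
  simp only [k1, k2, k3, k4, tensorOp_mul]
  rw [trace_tensorOp, Fin.prod_univ_seven]
  simp [v0,v1,v2,v3,v4,v5,v6, mul_assoc, XX, ZZ, ZX, trX, trZ, trXZ,
    Matrix.trace_neg, neg_mul, mul_neg]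

lemma trm6 : (k1*k4).trace = 0 := by
  simp only [k1, k2, k3, k4, tensorOp_mul]
  rw [trace_tensorOp, Fin.prod_univ_seven]
  simp [v0,v1,v2,v3,v4,v5,v6, mul_assoc, XX, ZZ, ZX, trX, trZ, trXZ,
    Matrix.trace_neg, neg_mul, mul_neg]

lemma trm7 : (k2*k3).trace = 0 := by
  simp only [k1, k2, k3, k4, tensorOp_mul]
  rw [trace_tensorOp, Fin.prod_univ_seven]
  simp [v0,v1,v2,v3,v4,v5,v6, mul_assoc, XX, ZZ, ZX, trX, trZ, trXZ,
    Matrix.trace_neg, neg_mul, mul_neg]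

lemma trm8 : (k2*k4).trace = 0 := by
  simp only [k1, k2, k3, k4, tensorOp_mul]
  rw [trace_tensorOp, Fin.prod_univ_seven]
  simp [v0,v1,v2,v3,v4,v5,v6, mul_assoc, XX, ZZ, ZX, trX, trZ, trXZ,
    Matrix.trace_neg, neg_mul, mul_neg]

lemma trm9 : (k3*k4).trace = 0 := by
  simp only [k1, k2, k3, k4, tensorOp_mul]
  rw [trace_tensorOp, Fin.prod_univ_seven]
  simp [v0,v1,v2,v3,v4,v5,v6, mul_assoc, XX, ZZ, ZX, trX, trZ, trXZ,
    Matrix.trace_neg, neg_mul, mul_neg]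

lemma trm10 : (k1*k2*k3).trace = 0 := by
  simp only [k1, k2, k3, k4, tensorOp_mul]
  rw [trace_tensorOp, Fin.prod_univ_seven]
  simp [v0,v1,v2,v3,v4,v5,v6, mul_assoc, XX, ZZ, ZX, trX, trZ, trXZ,
    Matrix.trace_neg, neg_mul, mul_neg]

lemma trm11 : (k1*k2*k4).trace = 0 := by
  simp only [k1, k2, k3, k4, tensorOp_mul]
  rw [trace_tensorOp, Fin.prod_univ_seven]
  simp [v0,v1,v2,v3,v4,v5,v6, mul_assoc, XX, ZZ, ZX, trX, trZ, trXZ,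
    Matrix.trace_neg, neg_mul, mul_neg]

lemma trm12 : (k1*k3*k4).trace = 0 := by
  simp only [k1, k2, k3, k4, tensorOp_mul]
  rw [trace_tensorOp, Fin.prod_univ_seven]
  simp [v0,v1,v2,v3,v4,v5,v6, mul_assoc, XX, ZZ, ZX, trX, trZ, trXZ,
    Matrix.trace_neg, neg_mul, mul_neg]

lemma trm13 : (k2*k3*k4).trace = 0 := by
  simp only [k1, k2, k3, k4, tensorOp_mul]
  rw [trace_tensorOp, Fin.prod_univ_seven]
  simp [v0,v1,v2,v3,v4,v5,v6, mul_assoc, XX, ZZ, ZX, trX, trZ, trXZ,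
    Matrix.trace_neg, neg_mul, mul_neg]

lemma trm14 : (k1*k2*k3*k4).trace = 0 := by
  simp only [k1, k2, k3, k4, tensorOp_mul]
  rw [trace_tensorOp, Fin.prod_univ_seven]
  simp [v0,v1,v2,v3,v4,v5,v6, mul_assoc, XX, ZZ, ZX, trX, trZ, trXZ,
    Matrix.trace_neg, neg_mul, mul_neg]

noncomputable def Pmat : Matrix (Fin 7 → Bool) (Fin 7 → Bool) ℂ :=
  (16 : ℂ)⁻¹ • ((1 + k1) * (1 + k2) * (1 + k3) * (1 + k4))

lemma expandP : (1 + k1) * (1 + k2) * (1 + k3) * (1 + k4) =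
    1 + k1 + k2 + k3 + k4 + k1*k2 + k1*k3 + k1*k4 + k2*k3 + k2*k4 + k3*k4
      + k1*k2*k3 + k1*k2*k4 + k1*k3*k4 + k2*k3*k4 + k1*k2*k3*k4 := by
  noncomm_ring

lemma trace_big_one : (1 : Matrix (Fin 7 → Bool) (Fin 7 → Bool) ℂ).trace = 128 := by
  rw [Matrix.trace_one]
  simp

lemma trace_Pmat : Pmat.trace = 8 := by
  rw [Pmat, Matrix.trace_smul, expandP]
  simp only [Matrix.trace_add, trace_big_one, trm0, trm1, trm2, trm3, trm4, trm5, trm6,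
    trm7, trm8, trm9, trm10, trm11, trm12, trm13, trm14]
  norm_num

lemma ka1 : k1 * (1 + k1) = 1 + k1 := by rw [mul_add, mul_one, k1sq, add_comm]
lemma ka2 : k2 * (1 + k2) = 1 + k2 := by rw [mul_add, mul_one, k2sq, add_comm]
lemma ka3 : k3 * (1 + k3) = 1 + k3 := by rw [mul_add, mul_one, k3sq, add_comm]
lemma ka4 : k4 * (1 + k4) = 1 + k4 := by rw [mul_add, mul_one, k4sq, add_comm]

lemma kc21 : k2 * (1 + k1) = (1 + k1) * k2 := by rw [mul_add, add_mul, mul_one, one_mul, c12]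
lemma kc31 : k3 * (1 + k1) = (1 + k1) * k3 := by rw [mul_add, add_mul, mul_one, one_mul, c13]
lemma kc32 : k3 * (1 + k2) = (1 + k2) * k3 := by rw [mul_add, add_mul, mul_one, one_mul, c23]
lemma kc41 : k4 * (1 + k1) = (1 + k1) * k4 := by rw [mul_add, add_mul, mul_one, one_mul, c14]
lemma kc42 : k4 * (1 + k2) = (1 + k2) * k4 := by rw [mul_add, add_mul, mul_one, one_mul, c24]
lemma kc43 : k4 * (1 + k3) = (1 + k3) * k4 := by rw [mul_add, add_mul, mul_one, one_mul, c34]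

lemma k1P : k1 * Pmat = Pmat := by
  rw [Pmat, Matrix.mul_smul]
  congr 1
  rw [← mul_assoc, ← mul_assoc, ← mul_assoc, ka1]

lemma k2P : k2 * Pmat = Pmat := by
  rw [Pmat, Matrix.mul_smul]
  congr 1
  rw [← mul_assoc, ← mul_assoc, ← mul_assoc, kc21, mul_assoc (1 + k1) k2 (1 + k2), ka2]

lemma k3P : k3 * Pmat = Pmat := by
  rw [Pmat, Matrix.mul_smul]
  congr 1
  rw [← mul_assoc, ← mul_assoc, ← mul_assoc, kc31, mul_assoc (1 + k1) k3 (1 + k2), kc32,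
    ← mul_assoc, mul_assoc ((1 + k1) * (1 + k2)) k3 (1 + k3), ka3]

lemma k4P : k4 * Pmat = Pmat := by
  rw [Pmat, Matrix.mul_smul]
  congr 1
  rw [← mul_assoc, ← mul_assoc, ← mul_assoc, kc41, mul_assoc (1 + k1) k4 (1 + k2), kc42,
    ← mul_assoc, mul_assoc ((1 + k1) * (1 + k2)) k4 (1 + k3), kc43,
    ← mul_assoc, mul_assoc ((1 + k1) * (1 + k2) * (1 + k3)) k4 (1 + k4), ka4]

lemma P_fix {x : (Fin 7 → Bool) → ℂ} (h1 : k1 *ᵥ x = x) (h2 : k2 *ᵥ x = x)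
    (h3 : k3 *ᵥ x = x) (h4 : k4 *ᵥ x = x) : Pmat *ᵥ x = x := by
  have e1 : (1 + k1) *ᵥ x = (2 : ℂ) • x := by
    rw [Matrix.add_mulVec, Matrix.one_mulVec, h1, two_smul]
  have e2 : (1 + k2) *ᵥ x = (2 : ℂ) • x := by
    rw [Matrix.add_mulVec, Matrix.one_mulVec, h2, two_smul]
  have e3 : (1 + k3) *ᵥ x = (2 : ℂ) • x := by
    rw [Matrix.add_mulVec, Matrix.one_mulVec, h3, two_smul]
  have e4 : (1 + k4) *ᵥ x = (2 : ℂ) • x := by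
    rw [Matrix.add_mulVec, Matrix.one_mulVec, h4, two_smul]
  rw [Pmat, Matrix.smul_mulVec, ← Matrix.mulVec_mulVec, ← Matrix.mulVec_mulVec,
    ← Matrix.mulVec_mulVec]
  simp only [Matrix.mulVec_smul, e1, e2, e3, e4, smul_smul]
  norm_num

lemma hH0 : steaneH 0 = k3 * k1 := by
  show steaneG 0 * steaneG 1 * steaneG 3 = _; rw [hk3, hg3]
lemma hH1 : steaneH 1 = k3 * k1 * k2 := by
  show steaneG 0 * steaneG 1 * steaneG 3 * steaneG 4 = _; rw [hk3, hg3, hg4]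
lemma hH2 : steaneH 2 = k3 := by
  show steaneG 0 * steaneG 1 = _; rw [hk3]
lemma hH3 : steaneH 3 = k4 * k2 := by
  show steaneG 1 * steaneG 2 * steaneG 4 = _; rw [hk4, hg4]
lemma hH4 : steaneH 4 = k3 * k4 * k2 := by
  show steaneG 0 * steaneG 2 * steaneG 4 = _; rw [hk34, hg4]
lemma hH5 : steaneH 5 = k2 := by
  show steaneG 4 = _; rw [hg4]

lemma fix_equiv (x : (Fin 7 → Bool) → ℂ) :
    (∀ j : Fin 6, steaneH j *ᵥ x = x) ↔
      (k1 *ᵥ x = x ∧ k2 *ᵥ x = x ∧ k3 *ᵥ x = x ∧ k4 *ᵥ x = x) := by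
  constructor
  · intro h
    have hk2x : k2 *ᵥ x = x := by rw [← hH5]; exact h 5
    have hk3x : k3 *ᵥ x = x := by rw [← hH2]; exact h 2
    have h0 : (k3 * k1) *ᵥ x = x := by rw [← hH0]; exact h 0
    have h3 : (k4 * k2) *ᵥ x = x := by rw [← hH3]; exact h 3
    have hk1x : k1 *ᵥ x = x := by
      have := congrArg (fun v => k3 *ᵥ v) h0
      simp only [Matrix.mulVec_mulVec, ← mul_assoc, k3sq, one_mul] at this
      rwa [hk3x] at this
    have hk4x : k4 *ᵥ x = x := by
      rw [← Matrix.mulVec_mulVec, hk2x] at h3; exact h3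
    exact ⟨hk1x, hk2x, hk3x, hk4x⟩
  · rintro ⟨h1, h2, h3, h4⟩ j
    have hstep : ∀ A B : Matrix (Fin 7 → Bool) (Fin 7 → Bool) ℂ,
        A *ᵥ x = x → B *ᵥ x = x → (A * B) *ᵥ x = x := fun A B hA hB => by
      rw [← Matrix.mulVec_mulVec, hB, hA]
    fin_cases j
    · show steaneH 0 *ᵥ x = x; rw [hH0]; exact hstep _ _ h3 h1
    · show steaneH 1 *ᵥ x = x; rw [hH1]; exact hstep _ _ (hstep _ _ h3 h1) h2
    · show steaneH 2 *ᵥ x = x; rw [hH2]; exact h3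
    · show steaneH 3 *ᵥ x = x; rw [hH3]; exact hstep _ _ h4 h2
    · show steaneH 4 *ᵥ x = x; rw [hH4]; exact hstep _ _ (hstep _ _ h3 h4) h2
    · show steaneH 5 *ᵥ x = x; rw [hH5]; exact h2

/-- (i) Every state in the Steane code space is a `+1`-eigenstate of all
the `h_j`, hence an eigenstate of `B_Steane` with the algebraically maximal eigenvalue `6`;
(ii) the common `+1`-eigenspace of the `h_j` (the Bell-degenerate subspace of `B_Steane`)
has dimension exactly `8`. -/
theorem stmt13 :
    (∀ ψ : (Fin 7 → Bool) → ℂ,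
      (∀ i : Fin 6, Matrix.mulVec (steaneG i) ψ = ψ) →
      (∀ j : Fin 6, Matrix.mulVec (steaneH j) ψ = ψ) ∧
        Matrix.mulVec bellSteane ψ = (6 : ℂ) • ψ) ∧
    Module.finrank ℂ
      ↥(⨅ j : Fin 6, Module.End.eigenspace (Matrix.mulVecLin (steaneH j)) 1) = 8 := by
  constructor
  · intro ψ hg
    have hstep : ∀ A B : Matrix (Fin 7 → Bool) (Fin 7 → Bool) ℂ,
        A *ᵥ ψ = ψ → B *ᵥ ψ = ψ → (A * B) *ᵥ ψ = ψ := fun A B hA hB => by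
      rw [← Matrix.mulVec_mulVec, hB, hA]
    have hh : ∀ j : Fin 6, steaneH j *ᵥ ψ = ψ := by
      intro j; fin_cases j
      · show (steaneG 0 * steaneG 1 * steaneG 3) *ᵥ ψ = ψ
        exact hstep _ _ (hstep _ _ (hg 0) (hg 1)) (hg 3)
      · show (steaneG 0 * steaneG 1 * steaneG 3 * steaneG 4) *ᵥ ψ = ψ
        exact hstep _ _ (hstep _ _ (hstep _ _ (hg 0) (hg 1)) (hg 3)) (hg 4)
      · show (steaneG 0 * steaneG 1) *ᵥ ψ = ψ
        exact hstep _ _ (hg 0) (hg 1)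
      · show (steaneG 1 * steaneG 2 * steaneG 4) *ᵥ ψ = ψ
        exact hstep _ _ (hstep _ _ (hg 1) (hg 2)) (hg 4)
      · show (steaneG 0 * steaneG 2 * steaneG 4) *ᵥ ψ = ψ
        exact hstep _ _ (hstep _ _ (hg 0) (hg 2)) (hg 4)
      · show steaneG 4 *ᵥ ψ = ψ
        exact hg 4
    refine ⟨hh, ?_⟩
    have hb : bellSteane =
        steaneH 0 + steaneH 1 + steaneH 2 + steaneH 3 + steaneH 4 + steaneH 5 := by
      rw [bellSteane, Fin.sum_univ_six]
    rw [hb]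
    simp only [Matrix.add_mulVec, hh 0, hh 1, hh 2, hh 3, hh 4, hh 5]
    funext i
    simp only [Pi.add_apply, Pi.smul_apply, smul_eq_mul]
    ring
  · set E := ⨅ j : Fin 6, Module.End.eigenspace (Matrix.mulVecLin (steaneH j)) 1 with hE
    have memE : ∀ x, x ∈ E ↔ ∀ j : Fin 6, steaneH j *ᵥ x = x := by
      intro x
      simp [hE, Submodule.mem_iInf, Module.End.mem_eigenspace_iff, Matrix.mulVecLin_apply]
    have hproj : LinearMap.IsProj E (Matrix.mulVecLin Pmat) := by
      constructor
      · intro x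
        rw [memE, fix_equiv]
        refine ⟨?_, ?_, ?_, ?_⟩ <;>
          simp only [Matrix.mulVecLin_apply, Matrix.mulVec_mulVec, k1P, k2P, k3P, k4P]
      · intro x hx
        rw [memE] at hx
        obtain ⟨h1, h2, h3, h4⟩ := (fix_equiv x).mp hx
        simpa using P_fix h1 h2 h3 h4
    have htr : LinearMap.trace ℂ _ (Matrix.mulVecLin Pmat) = Pmat.trace := by
      rw [LinearMap.trace_eq_matrix_trace ℂ (Pi.basisFun ℂ (Fin 7 → Bool)),
        LinearMap.toMatrix_eq_toMatrix', ← Matrix.toLin'_apply', LinearMap.toMatrix'_toLin']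
    have hfin := hproj.trace
    rw [htr, trace_Pmat] at hfin
    exact_mod_cast hfin.symm
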